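/- Let 𝒢 be a torsion class in mod-Λ and θ a stability condition with 𝒲(θ) = 0 (no nonzero θ-semistable objects in 𝒢). Then 𝒫̄(θ) = 𝒫(θ) and 𝒬̄(θ) = 𝒬(θ). If 𝒲(θ) ≠ 0 then both inclusions 𝒫(θ) ⊊ 𝒫̄(θ) and 𝒬(θ) ⊊ 𝒬̄(θ) are strict. -/

import Mathlib

/-!
Common framework: a torsion class `𝒢` in `mod-Λ` is modelled as a predicate
`G : ModuleCat R → Prop` (closed under isomorphism, quotients and extensions).
Strict subobjects, fibrations, cofibrations, strict morphisms, pseudo-torsion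
classes etc. follow the definitions of the paper.
-/

namespace PaperTC

variable {R : Type} [Ring R]

/-- Membership of a (type-level) module in a class of modules. -/
def Mem (G : ModuleCat.{0} R → Prop) (M : Type) [AddCommGroup M] [Module R M] : Prop :=
  G (ModuleCat.of R M)

/-- `A` is a strict subobject of `M` (w.r.t. the torsion class `G`):
`A` lies in `G` and `A ⊓ B'` lies in `G` for every subobject `B'` of `M`. -/
def IsStrictSub (G : ModuleCat.{0} R → Prop) {M : Type} [AddCommGroup M] [Module R M]
    (A : Submodule R M) : Prop :=
  Mem G ↥A ∧ ∀ B' : Submodule R M, Mem G ↥B' → Mem G ↥(A ⊓ B')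

/-- A fibration is a surjection whose kernel is a strict subobject of the source. -/
def IsFibration (G : ModuleCat.{0} R → Prop) {M N : Type} [AddCommGroup M] [Module R M]
    [AddCommGroup N] [Module R N] (f : M →ₗ[R] N) : Prop :=
  Function.Surjective f ∧ IsStrictSub G (LinearMap.ker f)

/-- A strict morphism: kernel is a strict subobject of the source and image a
strict subobject of the target. -/
def IsStrictMorphism (G : ModuleCat.{0} R → Prop) {M N : Type} [AddCommGroup M] [Module R M]
    [AddCommGroup N] [Module R N] (f : M →ₗ[R] N) : Prop :=
  IsStrictSub G (LinearMap.ker f) ∧ IsStrictSub G (LinearMap.range f)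

/-- `G` is a torsion class in `mod-Λ`. -/
structure IsTorsionClass (G : ModuleCat.{0} R → Prop) : Prop where
  iso_closed : ∀ (M N : Type) [AddCommGroup M] [Module R M] [AddCommGroup N] [Module R N],
      (M ≃ₗ[R] N) → Mem G M → Mem G N
  zero_mem : ∀ (M : Type) [AddCommGroup M] [Module R M], Subsingleton M → Mem G M
  quot_closed : ∀ (M : Type) [AddCommGroup M] [Module R M] (N : Submodule R M),
      Mem G M → Mem G (M ⧸ N)
  ext_closed : ∀ (A B C : Type) [AddCommGroup A] [Module R A] [AddCommGroup B] [Module R B]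
      [AddCommGroup C] [Module R C] (f : A →ₗ[R] B) (g : B →ₗ[R] C),
      Function.Injective f → Function.Surjective g →
      LinearMap.range f = LinearMap.ker g → Mem G A → Mem G C → Mem G B

/-- A pseudo-torsion class `P` in the torsion class `G`: nonempty (contains zero
objects), closed under strict quotients and under strict extensions. -/
structure IsPseudoTorsionClass (G P : ModuleCat.{0} R → Prop) : Prop where
  subset : ∀ M : ModuleCat.{0} R, P M → G M
  zero_mem : ∀ (M : Type) [AddCommGroup M] [Module R M], Subsingleton M → Mem G M → Mem P M
  quot_closed : ∀ (M : Type) [AddCommGroup M] [Module R M] (A : Submodule R M),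
      IsStrictSub G A → Mem P M → Mem P (M ⧸ A)
  ext_closed : ∀ (A B C : Type) [AddCommGroup A] [Module R A] [AddCommGroup B] [Module R B]
      [AddCommGroup C] [Module R C] (f : A →ₗ[R] B) (g : B →ₗ[R] C),
      Function.Injective f → Function.Surjective g →
      LinearMap.range f = LinearMap.ker g → IsStrictSub G (LinearMap.range f) →
      Mem P A → Mem P C → Mem P B

/-- A pseudo-torsionfree class `Q` in the torsion class `G`. -/
structure IsPseudoTorsionFreeClass (G Q : ModuleCat.{0} R → Prop) : Prop where
  subset : ∀ M : ModuleCat.{0} R, Q M → G M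
  zero_mem : ∀ (M : Type) [AddCommGroup M] [Module R M], Subsingleton M → Mem G M → Mem Q M
  sub_closed : ∀ (M : Type) [AddCommGroup M] [Module R M] (A : Submodule R M),
      IsStrictSub G A → Mem Q M → Mem Q ↥A
  ext_closed : ∀ (A B C : Type) [AddCommGroup A] [Module R A] [AddCommGroup B] [Module R B]
      [AddCommGroup C] [Module R C] (f : A →ₗ[R] B) (g : B →ₗ[R] C),
      Function.Injective f → Function.Surjective g →
      LinearMap.range f = LinearMap.ker g → IsStrictSub G (LinearMap.range f) →
      Mem Q A → Mem Q C → Mem Q B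

/-- `Y` lies in the right perpendicular class `X ⟂`: no nonzero strict morphism
from an object of `X` to `Y`. -/
def MemRightPerp (G X : ModuleCat.{0} R → Prop) (Y : Type) [AddCommGroup Y] [Module R Y] : Prop :=
  Mem G Y ∧ ∀ M : ModuleCat.{0} R, X M → ∀ f : M →ₗ[R] Y, IsStrictMorphism G f → f = 0

/-- `M` lies in the left perpendicular class `⟂ Y`. -/
def MemLeftPerp (G Y : ModuleCat.{0} R → Prop) (M : Type) [AddCommGroup M] [Module R M] : Prop :=
  Mem G M ∧ ∀ N : ModuleCat.{0} R, Y N → ∀ f : M →ₗ[R] N, IsStrictMorphism G f → f = 0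

/-- A pseudo-wide subcategory `W` of `G`. -/
structure IsPseudoWide (G W : ModuleCat.{0} R → Prop) : Prop where
  subset : ∀ M : ModuleCat.{0} R, W M → G M
  zero_mem : ∀ (M : Type) [AddCommGroup M] [Module R M], Subsingleton M → Mem G M → Mem W M
  kic : ∀ (A B : Type) [AddCommGroup A] [Module R A] [AddCommGroup B] [Module R B],
      Mem W A → Mem W B → ∀ f : A →ₗ[R] B, IsStrictMorphism G f →
      Mem W ↥(LinearMap.ker f) ∧ Mem W ↥(LinearMap.range f) ∧
        Mem W (B ⧸ LinearMap.range f)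
  ext_closed : ∀ (A B C : Type) [AddCommGroup A] [Module R A] [AddCommGroup B] [Module R B]
      [AddCommGroup C] [Module R C] (f : A →ₗ[R] B) (g : B →ₗ[R] C),
      Function.Injective f → Function.Surjective g →
      LinearMap.range f = LinearMap.ker g → IsStrictSub G (LinearMap.range f) →
      Mem W A → Mem W C → Mem W B

/-- A stability condition: a real-valued function on modules, invariant under
isomorphism and additive on short exact sequences of finitely generated modules
(this is exactly a functional on `K₀Λ` applied to dimension vectors). -/
structure StabilityCondition (R : Type) [Ring R] : Type 1 where
  val : ModuleCat.{0} R → ℝ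
  iso_inv : ∀ (M N : ModuleCat.{0} R), (↥M ≃ₗ[R] ↥N) → val M = val N
  additive : ∀ (M : ModuleCat.{0} R), Module.Finite R ↥M → ∀ A : Submodule R ↥M,
      val (ModuleCat.of R ↥A) + val (ModuleCat.of R (↥M ⧸ A)) = val M

/-- The value `θ(M)` of a stability condition on a module. -/
def StabilityCondition.app (θ : StabilityCondition R) (M : Type) [AddCommGroup M]
    [Module R M] : ℝ :=
  θ.val (ModuleCat.of R M)

/-- `𝒫(θ)`: objects which are zero, or on which `θ` is positive together with
all nonzero strict quotients. -/
def memP (G : ModuleCat.{0} R → Prop) (θ : StabilityCondition R)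
    (M : Type) [AddCommGroup M] [Module R M] : Prop :=
  Mem G M ∧ (Subsingleton M ∨ (0 < θ.app M ∧
    ∀ A : Submodule R M, IsStrictSub G A → A ≠ ⊤ → 0 < θ.app (M ⧸ A)))

/-- `𝒫̄(θ)`: `θ` is nonnegative on the object and all its strict quotients. -/
def memPbar (G : ModuleCat.{0} R → Prop) (θ : StabilityCondition R)
    (M : Type) [AddCommGroup M] [Module R M] : Prop :=
  Mem G M ∧ 0 ≤ θ.app M ∧ ∀ A : Submodule R M, IsStrictSub G A → 0 ≤ θ.app (M ⧸ A)

/-- `𝒬(θ)`: objects which are zero, or on which `θ` is negative together with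
all nonzero strict subobjects. -/
def memQ (G : ModuleCat.{0} R → Prop) (θ : StabilityCondition R)
    (M : Type) [AddCommGroup M] [Module R M] : Prop :=
  Mem G M ∧ (Subsingleton M ∨ (θ.app M < 0 ∧
    ∀ A : Submodule R M, IsStrictSub G A → A ≠ ⊥ → θ.app ↥A < 0))

/-- `𝒬̄(θ)`: `θ` is nonpositive on the object and all its strict subobjects. -/
def memQbar (G : ModuleCat.{0} R → Prop) (θ : StabilityCondition R)
    (M : Type) [AddCommGroup M] [Module R M] : Prop :=
  Mem G M ∧ θ.app M ≤ 0 ∧ ∀ A : Submodule R M, IsStrictSub G A → θ.app ↥A ≤ 0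

/-- `𝒲(θ)`: θ-semistable objects of `G`; equivalently `θ ∈ D_𝒢(M)`. -/
def memW (G : ModuleCat.{0} R → Prop) (θ : StabilityCondition R)
    (M : Type) [AddCommGroup M] [Module R M] : Prop :=
  Mem G M ∧ θ.app M = 0 ∧ ∀ A : Submodule R M, IsStrictSub G A → θ.app ↥A ≤ 0

/-- `𝒲₀(θ)`: objects of `𝒲(θ)` with no proper nonzero strict subobject in `𝒲(θ)`. -/
def memW0 (G : ModuleCat.{0} R → Prop) (θ : StabilityCondition R)
    (M : Type) [AddCommGroup M] [Module R M] : Prop :=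
  memW G θ M ∧ ∀ A : Submodule R M, IsStrictSub G A → memW G θ ↥A → A = ⊥ ∨ A = ⊤

/-- The linear path `θ_t = t·θ₁ + (1-t)·θ₀` in the stability space. -/
def lineSeg (θ₀ θ₁ : StabilityCondition R) (t : ℝ) : StabilityCondition R where
  val M := t * θ₁.val M + (1 - t) * θ₀.val M
  iso_inv M N e := by (try simp only []); rw [θ₁.iso_inv M N e, θ₀.iso_inv M N e]
  additive M hM A := by
    have h1 := θ₁.additive M hM A
    have h0 := θ₀.additive M hM A
    try simp only []
    linear_combination t * h1 + (1 - t) * h0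

/-- A smooth green path in the stability space. -/
structure IsGreenPath (G : ModuleCat.{0} R → Prop) (θ : ℝ → StabilityCondition R) : Prop where
  smooth : ∀ M : ModuleCat.{0} R, ContDiff ℝ (⊤ : ℕ∞) fun t => (θ t).val M
  green : ∀ (t : ℝ) (M : ModuleCat.{0} R), ¬Subsingleton ↥M → memW G (θ t) ↥M →
      0 < deriv (fun s => (θ s).val M) t
  eventually_pos : ∃ T : ℝ, ∀ t : ℝ, T < t → ∀ M : ModuleCat.{0} R, G M →
      ¬Subsingleton ↥M → 0 < (θ t).val M
  eventually_neg : ∃ T : ℝ, ∀ t : ℝ, t < T → ∀ M : ModuleCat.{0} R, G M →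
      ¬Subsingleton ↥M → (θ t).val M < 0

/-- A filtration `M = c 0 ⊃ c 1 ⊃ ⋯ ⊃ c m = 0` by strict subobjects whose
subquotients `c k / c (k+1)` lie in the slices `W (t k)` with `t` strictly
decreasing. -/
def IsSliceFiltration (G : ModuleCat.{0} R → Prop) {S : Type} [Preorder S]
    (W : S → ModuleCat.{0} R → Prop) {M : Type} [AddCommGroup M] [Module R M]
    (m : ℕ) (t : Fin m → S) (c : Fin (m + 1) → Submodule R M) : Prop :=
  c 0 = ⊤ ∧ c (Fin.last m) = ⊥ ∧ StrictAnti c ∧ StrictAnti t ∧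
  (∀ i, IsStrictSub G (c i)) ∧
  ∀ k : Fin m, W (t k) (ModuleCat.of R
    (↥(c k.castSucc) ⧸ Submodule.comap (c k.castSucc).subtype (c k.succ)))

/-- A strict HN-stratification of `G`: slices are pseudo-wide subcategories
indexed by a totally ordered set, with no nonzero strict morphisms backwards,
such that every object of `G` has a strict filtration with subquotients in
decreasing slices. -/
structure IsHNStratification (G : ModuleCat.{0} R → Prop) {S : Type} [LinearOrder S]
    (W : S → ModuleCat.{0} R → Prop) : Prop where
  wide : ∀ s : S, IsPseudoWide G (W s)
  no_backward : ∀ s₀ s₁ : S, s₀ < s₁ → ∀ X Y : ModuleCat.{0} R, W s₀ X → W s₁ Y →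
      ∀ f : X →ₗ[R] Y, IsStrictMorphism G f → f = 0
  filt : ∀ M : ModuleCat.{0} R, G M → ∃ (m : ℕ) (t : Fin m → S)
      (c : Fin (m + 1) → Submodule R ↥M), IsSliceFiltration G W m t c

-- ===== helpers start here =====
section Helpers

variable {G : ModuleCat.{0} R → Prop}

def subsingletonLEquiv (M N : Type) [AddCommGroup M] [Module R M] [AddCommGroup N] [Module R N]
    [Subsingleton M] [Subsingleton N] : M ≃ₗ[R] N where
  toFun := 0
  map_add' := by intros; simp
  map_smul' := by intros; simp
  invFun := 0
  left_inv x := Subsingleton.elim _ _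
  right_inv x := Subsingleton.elim _ _

lemma theta_iso (θ : StabilityCondition R) {M N : Type} [AddCommGroup M] [Module R M]
    [AddCommGroup N] [Module R N] (e : M ≃ₗ[R] N) : θ.app M = θ.app N :=
  θ.iso_inv (ModuleCat.of R M) (ModuleCat.of R N) e

lemma theta_add (θ : StabilityCondition R) (M : Type) [AddCommGroup M] [Module R M]
    (h : Module.Finite R M) (A : Submodule R M) :
    θ.app ↥A + θ.app (M ⧸ A) = θ.app M :=
  θ.additive (ModuleCat.of R M) h A

lemma theta_subsingleton (θ : StabilityCondition R) (M : Type) [AddCommGroup M] [Module R M]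
    [Subsingleton M] (h : Module.Finite R M) : θ.app M = 0 := by
  have h1 := theta_add θ M h ⊥
  have e1 : θ.app ↥(⊥ : Submodule R M) = θ.app M := theta_iso θ (subsingletonLEquiv _ _)
  have e2 : θ.app (M ⧸ (⊥ : Submodule R M)) = θ.app M :=
    theta_iso θ (Submodule.quotEquivOfEqBot _ rfl)
  linarith

lemma mem_of_map (hG : IsTorsionClass G) {M N : Type} [AddCommGroup M] [Module R M]
    [AddCommGroup N] [Module R N] (f : M →ₗ[R] N) (q : Submodule R M)
    (h1 : Mem G ↥(q ⊓ LinearMap.ker f)) (h2 : Mem G ↥(q.map f)) : Mem G ↥q := by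
  refine hG.ext_closed ↥(q ⊓ LinearMap.ker f) ↥q ↥(q.map f)
    (Submodule.inclusion inf_le_left)
    (f.restrict fun x hx => Submodule.mem_map_of_mem hx)
    (Submodule.inclusion_injective _) ?_ ?_ h1 h2
  · rintro ⟨y, hy⟩
    obtain ⟨x, hx, rfl⟩ := hy
    exact ⟨⟨x, hx⟩, rfl⟩
  · ext ⟨x, hx⟩
    constructor
    · rintro ⟨⟨a, ha⟩, heq⟩
      have hax : a = x := congrArg Subtype.val heq
      subst hax
      simpa [LinearMap.mem_ker, LinearMap.restrict_apply, Subtype.ext_iff] using ha.2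
    · intro hker
      have : f x = 0 := by
        have := hker
        simpa [LinearMap.mem_ker, LinearMap.restrict_apply, Subtype.ext_iff] using this
      exact ⟨⟨x, hx, this⟩, rfl⟩

lemma mem_map' (hG : IsTorsionClass G) {M N : Type} [AddCommGroup M] [Module R M]
    [AddCommGroup N] [Module R N] (f : M →ₗ[R] N) (p : Submodule R M) (hp : Mem G ↥p) :
    Mem G ↥(p.map f) := by
  have h := hG.quot_closed ↥p (LinearMap.ker (f.comp p.subtype)) hp
  refine hG.iso_closed _ _ ?_ h
  refine (LinearMap.quotKerEquivRange (f.comp p.subtype)).trans (LinearEquiv.ofEq _ _ ?_)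
  rw [LinearMap.range_comp, Submodule.range_subtype]

lemma bot_strict (hG : IsTorsionClass G) (M : Type) [AddCommGroup M] [Module R M] :
    IsStrictSub G (⊥ : Submodule R M) := by
  refine ⟨hG.zero_mem _ inferInstance, fun B' _ => ?_⟩
  rw [bot_inf_eq]
  exact hG.zero_mem _ inferInstance

lemma top_strict (hG : IsTorsionClass G) {M : Type} [AddCommGroup M] [Module R M]
    (hM : Mem G M) : IsStrictSub G (⊤ : Submodule R M) := by
  refine ⟨hG.iso_closed M _ Submodule.topEquiv.symm hM, fun B' hB' => ?_⟩
  rw [top_inf_eq]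
  exact hB'

lemma le_comap_mkQ {M : Type} [AddCommGroup M] [Module R M] (A : Submodule R M)
    (C : Submodule R (M ⧸ A)) : A ≤ Submodule.comap A.mkQ C := fun x hx => by
  show A.mkQ x ∈ C
  rw [show A.mkQ x = 0 from (Submodule.Quotient.mk_eq_zero A).mpr hx]
  exact C.zero_mem

lemma comap_mkQ_strict (hG : IsTorsionClass G) {M : Type} [AddCommGroup M] [Module R M]
    (A : Submodule R M) (hA : IsStrictSub G A)
    (C : Submodule R (M ⧸ A)) (hC : IsStrictSub G C) :
    IsStrictSub G (Submodule.comap A.mkQ C) := by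
  set B := Submodule.comap A.mkQ C with hBdef
  have hAB : A ≤ B := le_comap_mkQ A C
  have hmapB : B.map A.mkQ = C := by
    rw [hBdef, Submodule.map_comap_eq, Submodule.range_mkQ, top_inf_eq]
  constructor
  · refine mem_of_map hG A.mkQ B ?_ ?_
    · rw [Submodule.ker_mkQ, inf_eq_right.mpr hAB]
      exact hA.1
    · rw [hmapB]; exact hC.1
  · intro B' hB'
    refine mem_of_map hG A.mkQ (B ⊓ B') ?_ ?_
    · rw [Submodule.ker_mkQ, inf_right_comm, inf_eq_right.mpr hAB]
      exact hA.2 B' hB'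
    · have key : (B ⊓ B').map A.mkQ = C ⊓ B'.map A.mkQ := by
        ext y
        simp only [Submodule.mem_map, Submodule.mem_inf, Submodule.mem_comap, hBdef]
        constructor
        · rintro ⟨x, ⟨hxC, hxB'⟩, rfl⟩
          exact ⟨hxC, x, hxB', rfl⟩
        · rintro ⟨hyC, x, hxB', rfl⟩
          exact ⟨x, ⟨hyC, hxB'⟩, rfl⟩
      rw [key]
      exact hC.2 _ (mem_map' hG A.mkQ B' hB')

lemma map_subtype_strict (hG : IsTorsionClass G) {M : Type} [AddCommGroup M] [Module R M]
    (A : Submodule R M) (hA : IsStrictSub G A)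
    (C : Submodule R ↥A) (hC : IsStrictSub G C) :
    IsStrictSub G (C.map A.subtype) := by
  have eC : ∀ D : Submodule R ↥A, (↥D ≃ₗ[R] ↥(D.map A.subtype)) := fun D =>
    Submodule.equivMapOfInjective A.subtype A.injective_subtype D
  constructor
  · exact hG.iso_closed _ _ (eC C) hC.1
  · intro B' hB'
    set D := Submodule.comap A.subtype B' with hDdef
    have hD : Mem G ↥D := by
      refine hG.iso_closed _ _ ?_ (hA.2 B' hB')
      exact ((eC D).trans (LinearEquiv.ofEq _ _ (Submodule.map_comap_subtype A B'))).symm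
    have hCD : Mem G ↥(C ⊓ D) := hC.2 D hD
    have heq : (C ⊓ D).map A.subtype = C.map A.subtype ⊓ B' := by
      ext x
      simp only [Submodule.mem_map, Submodule.mem_inf, Submodule.mem_comap, hDdef]
      constructor
      · rintro ⟨a, ⟨haC, haB'⟩, rfl⟩
        exact ⟨⟨a, haC, rfl⟩, haB'⟩
      · rintro ⟨⟨a, haC, rfl⟩, hxB'⟩
        exact ⟨a, ⟨haC, hxB'⟩, rfl⟩
    rw [← heq]
    exact hG.iso_closed _ _ (eC (C ⊓ D)) hCD

end Helpers

section Main

variable {G : ModuleCat.{0} R → Prop}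

lemma P_subset_Pbar (hG : IsTorsionClass G)
    (hfin : ∀ M : ModuleCat.{0} R, G M → Module.Finite R ↥M)
    (θ : StabilityCondition R) (M : Type) [AddCommGroup M] [Module R M]
    (h : memP G θ M) : memPbar G θ M := by
  obtain ⟨hMG, h⟩ := h
  have hfinM : Module.Finite R M := hfin (ModuleCat.of R M) hMG
  rcases h with hs | ⟨hpos, hq⟩
  · haveI := hs
    refine ⟨hMG, le_of_eq (theta_subsingleton θ M hfinM).symm, fun A _ => ?_⟩
    haveI : Subsingleton (M ⧸ A) :=
      Submodule.Quotient.subsingleton_iff.mpr (Subsingleton.elim A ⊤)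
    have : Mem G (M ⧸ A) := hG.quot_closed M A hMG
    exact le_of_eq (theta_subsingleton θ (M ⧸ A) (hfin (ModuleCat.of R (M ⧸ A)) this)).symm
  · refine ⟨hMG, le_of_lt hpos, fun A hA => ?_⟩
    by_cases hAt : A = ⊤
    · haveI : Subsingleton (M ⧸ A) := Submodule.Quotient.subsingleton_iff.mpr hAt
      have : Mem G (M ⧸ A) := hG.quot_closed M A hMG
      exact le_of_eq (theta_subsingleton θ (M ⧸ A) (hfin (ModuleCat.of R (M ⧸ A)) this)).symm
    · exact le_of_lt (hq A hA hAt)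

lemma Q_subset_Qbar (hG : IsTorsionClass G)
    (hfin : ∀ M : ModuleCat.{0} R, G M → Module.Finite R ↥M)
    (θ : StabilityCondition R) (M : Type) [AddCommGroup M] [Module R M]
    (h : memQ G θ M) : memQbar G θ M := by
  obtain ⟨hMG, h⟩ := h
  have hfinM : Module.Finite R M := hfin (ModuleCat.of R M) hMG
  rcases h with hs | ⟨hneg, hq⟩
  · haveI := hs
    refine ⟨hMG, le_of_eq (theta_subsingleton θ M hfinM), fun A hA => ?_⟩
    haveI : Subsingleton ↥A := ⟨fun a b => Subtype.ext (Subsingleton.elim _ _)⟩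
    exact le_of_eq (theta_subsingleton θ ↥A (hfin (ModuleCat.of R ↥A) hA.1))
  · refine ⟨hMG, le_of_lt hneg, fun A hA => ?_⟩
    by_cases hAb : A = ⊥
    · subst hAb
      haveI : Subsingleton ↥(⊥ : Submodule R M) := inferInstance
      exact le_of_eq (theta_subsingleton θ _ (hfin (ModuleCat.of R ↥(⊥ : Submodule R M)) hA.1))
    · exact le_of_lt (hq A hA hAb)

lemma Pbar_W (hG : IsTorsionClass G)
    (hfin : ∀ M : ModuleCat.{0} R, G M → Module.Finite R ↥M)
    (θ : StabilityCondition R) (M : Type) [AddCommGroup M] [Module R M]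
    (hM : memPbar G θ M) (A : Submodule R M) (hA : IsStrictSub G A)
    (hz : θ.app (M ⧸ A) = 0) : memW G θ (M ⧸ A) := by
  have hNG : Mem G (M ⧸ A) := hG.quot_closed M A hM.1
  refine ⟨hNG, hz, fun C hC => ?_⟩
  set B := Submodule.comap A.mkQ C with hBdef
  have hAB : A ≤ B := le_comap_mkQ A C
  have hB : IsStrictSub G B := comap_mkQ_strict hG A hA C hC
  have hfinN : Module.Finite R (M ⧸ A) := hfin (ModuleCat.of R (M ⧸ A)) hNG
  have hadd := theta_add θ (M ⧸ A) hfinN C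
  have hCB : B.map A.mkQ = C := by
    rw [hBdef, Submodule.map_comap_eq, Submodule.range_mkQ, top_inf_eq]
  have hq : θ.app ((M ⧸ A) ⧸ C) = θ.app (M ⧸ B) := by
    refine theta_iso θ ?_
    exact (Submodule.quotEquivOfEq _ _ hCB.symm).trans
      (Submodule.quotientQuotientEquivQuotient A B hAB)
  have := hM.2.2 B hB
  linarith [hq ▸ hadd]

lemma Qbar_W (hG : IsTorsionClass G)
    (θ : StabilityCondition R) (M : Type) [AddCommGroup M] [Module R M]
    (hM : memQbar G θ M) (A : Submodule R M) (hA : IsStrictSub G A)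
    (hz : θ.app ↥A = 0) : memW G θ ↥A := by
  refine ⟨hA.1, hz, fun C hC => ?_⟩
  have hstrict := map_subtype_strict hG A hA C hC
  have := hM.2.2 _ hstrict
  have e : θ.app ↥C = θ.app ↥(C.map A.subtype) :=
    theta_iso θ (Submodule.equivMapOfInjective A.subtype A.injective_subtype C)
  linarith

lemma Pbar_subset_P (hG : IsTorsionClass G)
    (hfin : ∀ M : ModuleCat.{0} R, G M → Module.Finite R ↥M)
    (θ : StabilityCondition R)
    (hW : ∀ X : ModuleCat.{0} R, memW G θ ↥X → Subsingleton ↥X)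
    (M : Type) [AddCommGroup M] [Module R M]
    (hM : memPbar G θ M) : memP G θ M := by
  refine ⟨hM.1, ?_⟩
  by_cases hMs : Subsingleton M
  · exact Or.inl hMs
  right
  have main : ∀ A : Submodule R M, IsStrictSub G A → A ≠ ⊤ → 0 < θ.app (M ⧸ A) := by
    intro A hA hAne
    rcases (hM.2.2 A hA).lt_or_eq with h | h
    · exact h
    exfalso
    have hNW : memW G θ (M ⧸ A) := Pbar_W hG hfin θ M hM A hA h.symm
    have : Subsingleton (M ⧸ A) := hW (ModuleCat.of R (M ⧸ A)) hNW
    exact hAne (Submodule.Quotient.subsingleton_iff.mp this)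
  refine ⟨?_, main⟩
  have hbot : (⊥ : Submodule R M) ≠ ⊤ := by
    intro h
    exact hMs ⟨fun a b => by
      have ha : a ∈ (⊥ : Submodule R M) := h ▸ Submodule.mem_top
      have hb : b ∈ (⊥ : Submodule R M) := h ▸ Submodule.mem_top
      rw [Submodule.mem_bot] at ha hb
      rw [ha, hb]⟩
  have := main ⊥ (bot_strict hG M) hbot
  have e : θ.app (M ⧸ (⊥ : Submodule R M)) = θ.app M :=
    theta_iso θ (Submodule.quotEquivOfEqBot _ rfl)
  linarith

lemma Qbar_subset_Q (hG : IsTorsionClass G)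
    (hfin : ∀ M : ModuleCat.{0} R, G M → Module.Finite R ↥M)
    (θ : StabilityCondition R)
    (hW : ∀ X : ModuleCat.{0} R, memW G θ ↥X → Subsingleton ↥X)
    (M : Type) [AddCommGroup M] [Module R M]
    (hM : memQbar G θ M) : memQ G θ M := by
  refine ⟨hM.1, ?_⟩
  by_cases hMs : Subsingleton M
  · exact Or.inl hMs
  right
  have main : ∀ A : Submodule R M, IsStrictSub G A → A ≠ ⊥ → θ.app ↥A < 0 := by
    intro A hA hAne
    rcases (hM.2.2 A hA).lt_or_eq with h | h
    · exact h
    exfalso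
    have hAW : memW G θ ↥A := Qbar_W hG θ M hM A hA h
    have hss : Subsingleton ↥A := hW (ModuleCat.of R ↥A) hAW
    exact hAne (by
      ext x
      simp only [Submodule.mem_bot]
      constructor
      · intro hx
        have : (⟨x, hx⟩ : ↥A) = ⟨0, A.zero_mem⟩ := Subsingleton.elim _ _
        exact congrArg Subtype.val this
      · rintro rfl; exact A.zero_mem)
  refine ⟨?_, main⟩
  have htop : (⊤ : Submodule R M) ≠ ⊥ := by
    intro h
    exact hMs ⟨fun a b => by
      have ha : a ∈ (⊥ : Submodule R M) := h ▸ Submodule.mem_top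
      have hb : b ∈ (⊥ : Submodule R M) := h ▸ Submodule.mem_top
      rw [Submodule.mem_bot] at ha hb
      rw [ha, hb]⟩
  have := main ⊤ (top_strict hG hM.1) htop
  have e : θ.app ↥(⊤ : Submodule R M) = θ.app M := theta_iso θ Submodule.topEquiv
  linarith

end Main


theorem statement_14 (k : Type) [Field k] [Algebra k R] [FiniteDimensional k R]
    (G : ModuleCat.{0} R → Prop) (hG : IsTorsionClass G)
    (hfin : ∀ M : ModuleCat.{0} R, G M → Module.Finite R ↥M)
    (θ : StabilityCondition R) :
    ((∀ X : ModuleCat.{0} R, memW G θ ↥X → Subsingleton ↥X) →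
      (∀ M : ModuleCat.{0} R, (memPbar G θ ↥M ↔ memP G θ ↥M)) ∧
      (∀ M : ModuleCat.{0} R, (memQbar G θ ↥M ↔ memQ G θ ↥M))) ∧
    ((∃ X : ModuleCat.{0} R, memW G θ ↥X ∧ ¬Subsingleton ↥X) →
      ((∀ M : ModuleCat.{0} R, memP G θ ↥M → memPbar G θ ↥M) ∧
       (∃ M : ModuleCat.{0} R, memPbar G θ ↥M ∧ ¬memP G θ ↥M)) ∧
      ((∀ M : ModuleCat.{0} R, memQ G θ ↥M → memQbar G θ ↥M) ∧
       (∃ M : ModuleCat.{0} R, memQbar G θ ↥M ∧ ¬memQ G θ ↥M))) := by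
  constructor
  · intro hW
    constructor
    · intro M
      exact ⟨fun h => Pbar_subset_P hG hfin θ hW ↥M h,
             fun h => P_subset_Pbar hG hfin θ ↥M h⟩
    · intro M
      exact ⟨fun h => Qbar_subset_Q hG hfin θ hW ↥M h,
             fun h => Q_subset_Qbar hG hfin θ ↥M h⟩
  · rintro ⟨X, hXW, hXns⟩
    have hXG : Mem G ↥X := hXW.1
    have hfinX : Module.Finite R ↥X := hfin (ModuleCat.of R ↥X) hXG
    have hXPbar : memPbar G θ ↥X := by
      refine ⟨hXG, le_of_eq hXW.2.1.symm, fun A hA => ?_⟩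
      have hadd := theta_add θ ↥X hfinX A
      have := hXW.2.2 A hA
      linarith [hXW.2.1]
    have hXQbar : memQbar G θ ↥X := ⟨hXG, le_of_eq hXW.2.1, hXW.2.2⟩
    have hXnP : ¬memP G θ ↥X := by
      rintro ⟨-, h | ⟨hpos, -⟩⟩
      · exact hXns h
      · rw [hXW.2.1] at hpos; exact lt_irrefl 0 hpos
    have hXnQ : ¬memQ G θ ↥X := by
      rintro ⟨-, h | ⟨hneg, -⟩⟩
      · exact hXns h
      · rw [hXW.2.1] at hneg; exact lt_irrefl 0 hneg
    exact ⟨⟨fun M h => P_subset_Pbar hG hfin θ ↥M h, X, hXPbar, hXnP⟩,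
           ⟨fun M h => Q_subset_Qbar hG hfin θ ↥M h, X, hXQbar, hXnQ⟩⟩


end PaperTC
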